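/- Consider the 2-Actions-And-2-Models case with the good-prior Bernoulli instance ν_1(θ1) = ν_1(θ2) = Bern(1/2), ν_2(θ1) = Bern(1/2 − Δ), ν_2(θ2) = Bern(1/2 + Δ), where Δ = √(1/(8·(1 − p_1(θ1))·T)) and T ≥ 1/(1 − p_1(θ1)). Then for every t ≤ T, E^{θ1}[p_t(θ2)^{-1}] ≤ 5/(1 − p_1(θ1)), and consequently E^{θ1}[p_t(θ2)] ≥ (1 − p_1(θ1))/5. -/

import Mathlib

open MeasureTheory ProbabilityTheory

noncomputable section

/-- A two-action, two-model stochastic bandit instance.  Actions and models are both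
indexed by `Fin 2`; model `0` is `θ1` and model `1` is `θ2`.  The reward distribution
`ν_i(θ)` of action `i` under model `θ` has density `ℓ i θ` with respect to the common
measure `ν`, which is supported on `[0,1]`. -/
structure TwoTwoBandit where
  ν : Measure ℝ
  supp : ∀ᵐ x ∂ν, x ∈ Set.Icc (0 : ℝ) 1
  ℓ : Fin 2 → Fin 2 → ℝ → ℝ
  ℓ_meas : ∀ i θ, Measurable (ℓ i θ)
  ℓ_nonneg : ∀ i θ x, 0 ≤ ℓ i θ x
  ℓ_int : ∀ i θ, ∫ x, ℓ i θ x ∂ν = 1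

namespace TwoTwoBandit

/-- The reward distribution `ν_i(θ)`. -/
def dist (B : TwoTwoBandit) (i θ : Fin 2) : Measure ℝ :=
  B.ν.withDensity fun x => ENNReal.ofReal (B.ℓ i θ x)

/-- The mean reward `μ_i(θ)`. -/
def mean (B : TwoTwoBandit) (i θ : Fin 2) : ℝ :=
  ∫ x, x * B.ℓ i θ x ∂B.ν

/-- The smoothness assumption with parameter `s`:  ν-almost surely,
`s⁻¹ · ℓ_i(θ1) ≤ ℓ_i(θ2) ≤ s · ℓ_i(θ1)` for both actions `i`. -/
def Smooth (B : TwoTwoBandit) (s : ℝ) : Prop :=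
  ∀ i, ∀ᵐ x ∂B.ν, s⁻¹ * B.ℓ i 0 x ≤ B.ℓ i 1 x ∧ B.ℓ i 1 x ≤ s * B.ℓ i 0 x

end TwoTwoBandit

/-- A realization of Thompson Sampling on the two-action two-model bandit `B`, with
prior mass `prior` on model `θ1` and true reward-generating model `θstar`.
`p t ω` is the posterior probability mass `p_t(θ1)` of model `θ1` at time `t`
(so `p_t(θ2) = 1 - p t ω`); `F` is the history filtration, `I t` the action selected at
step `t` and `X i t` the reward of action `i` at step `t`.  The fields state that:
the posterior is adapted, starts at the prior and evolves by the Bayes rule; conditionally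
on the history the action `I t` equals `i` with probability `p_t(θ_i)`; and each reward
`X i t` is independent of the history and of `I t`, with distribution `ν_i(θstar)`. -/
structure TSProcess (B : TwoTwoBandit) (prior : ℝ) (θstar : Fin 2)
    (Ω : Type*) [mΩ : MeasurableSpace Ω] where
  P : Measure Ω
  P_prob : IsProbabilityMeasure P
  F : Filtration ℕ mΩ
  I : ℕ → Ω → Fin 2
  X : Fin 2 → ℕ → Ω → ℝ
  p : ℕ → Ω → ℝ
  I_meas : ∀ t, Measurable[F (t + 1)] (I t)
  X_meas : ∀ i t, Measurable (X i t)
  p_adapted : ∀ t, Measurable[F t] (p t)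
  p_mem : ∀ t ω, p t ω ∈ Set.Icc (0 : ℝ) 1
  p_one : ∀ ω, p 1 ω = prior
  bayes : ∀ t ω, 1 ≤ t →
    p (t + 1) ω = p t ω * B.ℓ (I t ω) 0 (X (I t ω) t ω) /
      (p t ω * B.ℓ (I t ω) 0 (X (I t ω) t ω)
        + (1 - p t ω) * B.ℓ (I t ω) 1 (X (I t ω) t ω))
  action_prob : ∀ t, 1 ≤ t →
    P[(fun ω => if I t ω = 0 then (1 : ℝ) else 0)|F t] =ᵐ[P] p t
  reward_law : ∀ i t, P.map (X i t) = B.dist i θstar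
  reward_indep : ∀ i t,
    Indep (MeasurableSpace.comap (X i t) inferInstance)
      (F t ⊔ MeasurableSpace.comap (I t) ⊤) P

namespace TSProcess

variable {B : TwoTwoBandit} {prior : ℝ} {θstar : Fin 2} {Ω : Type*} [MeasurableSpace Ω]

/-- The frequentist regret `R_T(θstar, TS(prior)) = E Σ_{t=1}^T (μ_1(θstar) − μ_{I_t}(θstar))`
of the Thompson Sampling process over horizon `T` (suitable when action `0` is optimal
under the true model, e.g. `θstar = θ1`). -/
def regret (proc : TSProcess B prior θstar Ω) (T : ℕ) : ℝ :=
  ∫ ω, (∑ t ∈ Finset.Icc 1 T, (B.mean 0 θstar - B.mean (proc.I t ω) θstar)) ∂proc.P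

/-- The frequentist regret `E Σ_{t=1}^T (max_i μ_i(θstar) − μ_{I_t}(θstar))`. -/
def regretMax (proc : TSProcess B prior θstar Ω) (T : ℕ) : ℝ :=
  ∫ ω, (∑ t ∈ Finset.Icc 1 T,
    (max (B.mean 0 θstar) (B.mean 1 θstar) - B.mean (proc.I t ω) θstar)) ∂proc.P

end TSProcess

/-- The Bernoulli distribution `Bern(q)` on `{0,1} ⊆ ℝ` with mean `q`. -/
def bern (q : ℝ) : Measure ℝ :=
  ENNReal.ofReal q • Measure.dirac 1 + ENNReal.ofReal (1 - q) • Measure.dirac 0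

/-!
Write `q_t = p_t(θ2) = 1 - p t`. By Bayes' rule `q_{t+1}⁻¹ = 1 + (p_t / q_t) · L_{I_t}(X_{I_t,t})`,
where `L_i = ℓ_i(θ1) / ℓ_i(θ2)`. The reward is independent of the history and of the chosen
action, and under `θ1` the ratio `L_i` has mean `1 + χ²(ν_i(θ1), ν_i(θ2))`: this is `1` for the
first action and `1 + 4Δ² / (1/4 - Δ²) ≤ 1 + 32Δ²` for the second. As the second action is chosen
with conditional probability `q_t`, taking expectations gives
`E[q_{t+1}⁻¹] ≤ 1 + E[p_t² / q_t] + (1 + 32Δ²) E[p_t] ≤ E[q_t⁻¹] + 32Δ²`,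
so `E[q_t⁻¹] ≤ q_1⁻¹ + 32Δ²T = 5 / q_1`, as `Δ` is chosen with `32Δ²T = 4 / q_1`.
Finally `E[q_t] ≥ E[q_t⁻¹]⁻¹` by Jensen's inequality.
-/

lemma inv_one_sub_bayes_eq {p L₀ L₁ : ℝ} (hp0 : 0 ≤ p) (hp1 : p < 1) (hL₀ : 0 ≤ L₀) (hL₁ : 0 < L₁) :
    (1 - p * L₀ / (p * L₀ + (1 - p) * L₁))⁻¹ = 1 + L₀ / L₁ * (p / (1 - p)) := by
  have hp : 0 < 1 - p := by linarith
  have hD : 0 < p * L₀ + (1 - p) * L₁ := by positivity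
  field_simp
  ring

lemma bayes_lt_one {p L₀ L₁ : ℝ} (hp0 : 0 ≤ p) (hp1 : p < 1) (hL₀ : 0 ≤ L₀) (hL₁ : 0 < L₁) :
    p * L₀ / (p * L₀ + (1 - p) * L₁) < 1 := by
  have hp : 0 < 1 - p := by linarith
  rw [div_lt_one (by positivity)]
  nlinarith

lemma inv_le_integral_of_integral_inv_le {α : Type*} [MeasurableSpace α] {μ : Measure α}
    [IsProbabilityMeasure μ] {f : α → ℝ} {M : ℝ} (hM : 0 < M) (hf : Integrable f μ)
    (hf_pos : ∀ᵐ x ∂μ, 0 < f x) (hf_inv : Integrable (fun x => (f x)⁻¹) μ)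
    (h : ∫ x, (f x)⁻¹ ∂μ ≤ M) : M⁻¹ ≤ ∫ x, f x ∂μ := by
  have hpt : ∀ᵐ x ∂μ, 2 * M⁻¹ - M⁻¹ ^ 2 * (f x)⁻¹ ≤ f x := by
    filter_upwards [hf_pos] with x hx
    have : 0 ≤ (f x - M⁻¹) ^ 2 / f x := by positivity
    have : (f x - M⁻¹) ^ 2 / f x = f x - (2 * M⁻¹ - M⁻¹ ^ 2 * (f x)⁻¹) := by
      field_simp
      ring
    linarith
  have hmono : ∫ x, (2 * M⁻¹ - M⁻¹ ^ 2 * (f x)⁻¹) ∂μ ≤ ∫ x, f x ∂μ :=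
    integral_mono_ae ((integrable_const _).sub (hf_inv.const_mul _)) hf hpt
  rw [integral_sub (integrable_const _) (hf_inv.const_mul _), integral_const, probReal_univ,
    one_smul, integral_const_mul] at hmono
  calc M⁻¹ = 2 * M⁻¹ - M⁻¹ ^ 2 * M := by field_simp; ring
    _ ≤ 2 * M⁻¹ - M⁻¹ ^ 2 * ∫ x, (f x)⁻¹ ∂μ := by gcongr
    _ ≤ ∫ x, f x ∂μ := hmono

lemma bern_apply_one (q : ℝ) : bern q {1} = ENNReal.ofReal q := by
  simp [bern]

lemma bern_apply_zero (q : ℝ) : bern q {0} = ENNReal.ofReal (1 - q) := by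
  simp [bern]

lemma integrable_bern (q : ℝ) (h : ℝ → ℝ) : Integrable h (bern q) :=
  ((integrable_dirac enorm_lt_top).smul_measure ENNReal.ofReal_ne_top).add_measure
    ((integrable_dirac enorm_lt_top).smul_measure ENNReal.ofReal_ne_top)

lemma integral_bern {q : ℝ} (hq0 : 0 ≤ q) (hq1 : q ≤ 1) (h : ℝ → ℝ) :
    ∫ x, h x ∂bern q = q * h 1 + (1 - q) * h 0 := by
  have hdirac (z : ℝ) (r : ENNReal) (hr : r ≠ ⊤) : Integrable h (r • Measure.dirac z) :=
    (integrable_dirac enorm_lt_top).smul_measure hr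
  rw [bern, integral_add_measure (hdirac 1 _ ENNReal.ofReal_ne_top)
    (hdirac 0 _ ENNReal.ofReal_ne_top),
    integral_smul_measure, integral_smul_measure, integral_dirac, integral_dirac,
    ENNReal.toReal_ofReal hq0, ENNReal.toReal_ofReal (by linarith), smul_eq_mul, smul_eq_mul]

lemma ae_bern {q : ℝ} {P : ℝ → Prop} (h0 : P 0) (h1 : P 1) : ∀ᵐ x ∂bern q, P x := by
  rw [bern, ae_add_measure_iff]
  exact ⟨Measure.ae_smul_measure (by simpa [ae_dirac_eq] using h1) _,
    Measure.ae_smul_measure (by simpa [ae_dirac_eq] using h0) _⟩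

-- `a² / b + (1 - a)² / (1 - b) = 1 + (a - b)² / (b (1 - b))`, here `1 + 4Δ² / (1/4 - Δ²)`.
lemma sq_div_add_sq_div_le {Δ : ℝ} (hΔ : Δ ^ 2 ≤ 1 / 8) :
    (1 / 2 - Δ) ^ 2 / (1 / 2 + Δ) + (1 - (1 / 2 - Δ)) ^ 2 / (1 - (1 / 2 + Δ)) ≤ 1 + 32 * Δ ^ 2 := by
  have hb : 0 < 1 / 2 + Δ := by nlinarith
  have hb' : 0 < 1 / 2 - Δ := by nlinarith
  rw [div_add_div _ _ hb.ne' (by linarith), div_le_iff₀ (by nlinarith)]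
  nlinarith

namespace TwoTwoBandit

variable (B : TwoTwoBandit)

def likelihoodRatio (i : Fin 2) (x : ℝ) : ℝ := B.ℓ i 0 x / B.ℓ i 1 x

/-- For `θ = θ1` the two means bounded here are `1 + χ²(ν_i(θ1), ν_i(θ2))`. -/
structure LikelihoodRatioBound (θ : Fin 2) (c : ℝ) : Prop where
  ae_ℓ_pos : ∀ i, ∀ᵐ x ∂B.dist i θ, 0 < B.ℓ i 1 x
  integrable : ∀ i, Integrable (B.likelihoodRatio i) (B.dist i θ)
  integral_zero_le : ∫ x, B.likelihoodRatio 0 x ∂B.dist 0 θ ≤ 1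
  integral_one_le : ∫ x, B.likelihoodRatio 1 x ∂B.dist 1 θ ≤ 1 + c

lemma measurable_likelihoodRatio (i : Fin 2) : Measurable (B.likelihoodRatio i) :=
  (B.ℓ_meas i 0).div (B.ℓ_meas i 1)

lemma ℓ_mul_toReal_ν_singleton (i θ : Fin 2) (z : ℝ) :
    B.ℓ i θ z * (B.ν {z}).toReal = (B.dist i θ {z}).toReal := by
  rw [dist, withDensity_apply _ (measurableSet_singleton z), lintegral_singleton,
    ENNReal.toReal_mul, ENNReal.toReal_ofReal (B.ℓ_nonneg i θ z)]

variable {B}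

lemma ℓ_mul_toReal_ν_of_dist_eq_bern {i θ : Fin 2} {q : ℝ} (hq0 : 0 ≤ q) (hq1 : q ≤ 1)
    (h : B.dist i θ = bern q) :
    B.ℓ i θ 1 * (B.ν {1}).toReal = q ∧ B.ℓ i θ 0 * (B.ν {0}).toReal = 1 - q := by
  simp only [ℓ_mul_toReal_ν_singleton, h, bern_apply_one, bern_apply_zero,
    ENNReal.toReal_ofReal hq0, ENNReal.toReal_ofReal (sub_nonneg.2 hq1), and_self]

lemma ℓ_pos_of_dist_eq_bern {i θ : Fin 2} {q : ℝ} (hq0 : 0 < q) (hq1 : q < 1)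
    (h : B.dist i θ = bern q) : 0 < B.ℓ i θ 0 ∧ 0 < B.ℓ i θ 1 := by
  obtain ⟨h₁, h₀⟩ := ℓ_mul_toReal_ν_of_dist_eq_bern hq0.le hq1.le h
  exact ⟨pos_of_mul_pos_left (h₀ ▸ sub_pos.2 hq1) ENNReal.toReal_nonneg,
    pos_of_mul_pos_left (h₁ ▸ hq0) ENNReal.toReal_nonneg⟩

lemma ae_ℓ_pos_of_dist_eq_bern {i θ θ' : Fin 2} {a b : ℝ} (hb0 : 0 < b) (hb1 : b < 1)
    (ha : B.dist i θ = bern a) (hb : B.dist i θ' = bern b) :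
    ∀ᵐ x ∂B.dist i θ, 0 < B.ℓ i θ' x := by
  obtain ⟨h₀, h₁⟩ := ℓ_pos_of_dist_eq_bern hb0 hb1 hb
  rw [ha]
  exact ae_bern h₀ h₁

lemma integral_likelihoodRatio_of_dist_eq_bern {i : Fin 2} {a b : ℝ} (ha0 : 0 ≤ a) (ha1 : a ≤ 1)
    (hb0 : 0 < b) (hb1 : b < 1) (ha : B.dist i 0 = bern a) (hb : B.dist i 1 = bern b) :
    ∫ x, B.likelihoodRatio i x ∂B.dist i 0 = a ^ 2 / b + (1 - a) ^ 2 / (1 - b) := by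
  obtain ⟨ha₁, ha₀⟩ := ℓ_mul_toReal_ν_of_dist_eq_bern ha0 ha1 ha
  obtain ⟨hb₁, hb₀⟩ := ℓ_mul_toReal_ν_of_dist_eq_bern hb0.le hb1.le hb
  have hm₁ : (B.ν {1}).toReal ≠ 0 := right_ne_zero_of_mul (hb₁ ▸ hb0.ne')
  have hm₀ : (B.ν {0}).toReal ≠ 0 := right_ne_zero_of_mul (hb₀ ▸ (sub_pos.2 hb1).ne')
  have hr₁ : B.likelihoodRatio i 1 = a / b := by
    rw [likelihoodRatio, ← ha₁, ← hb₁, mul_div_mul_right _ _ hm₁]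
  have hr₀ : B.likelihoodRatio i 0 = (1 - a) / (1 - b) := by
    rw [likelihoodRatio, ← ha₀, ← hb₀, mul_div_mul_right _ _ hm₀]
  rw [ha, integral_bern ha0 ha1, hr₁, hr₀]
  ring

theorem likelihoodRatioBound_of_bern {Δ : ℝ} (hΔ : Δ ^ 2 ≤ 1 / 8)
    (h₀₀ : B.dist 0 0 = bern (1 / 2)) (h₀₁ : B.dist 0 1 = bern (1 / 2))
    (h₁₀ : B.dist 1 0 = bern (1 / 2 - Δ)) (h₁₁ : B.dist 1 1 = bern (1 / 2 + Δ)) :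
    B.LikelihoodRatioBound 0 (32 * Δ ^ 2) := by
  have ha₀ : 0 ≤ 1 / 2 - Δ := by nlinarith
  have ha₁ : 1 / 2 - Δ ≤ 1 := by nlinarith
  have hb₀ : 0 < 1 / 2 + Δ := by nlinarith
  have hb₁ : 1 / 2 + Δ < 1 := by nlinarith
  refine ⟨Fin.forall_fin_two.2 ⟨?_, ?_⟩, Fin.forall_fin_two.2 ⟨?_, ?_⟩, ?_, ?_⟩
  · exact ae_ℓ_pos_of_dist_eq_bern (by norm_num) (by norm_num) h₀₀ h₀₁
  · exact ae_ℓ_pos_of_dist_eq_bern hb₀ hb₁ h₁₀ h₁₁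
  · exact h₀₀ ▸ integrable_bern _ _
  · exact h₁₀ ▸ integrable_bern _ _
  · rw [integral_likelihoodRatio_of_dist_eq_bern (by norm_num) (by norm_num) (by norm_num)
      (by norm_num) h₀₀ h₀₁]
    norm_num
  · exact (integral_likelihoodRatio_of_dist_eq_bern ha₀ ha₁ hb₀ hb₁ h₁₀ h₁₁).trans_le
      (sq_div_add_sq_div_le hΔ)

end TwoTwoBandit

namespace TSProcess

variable {B : TwoTwoBandit} {prior : ℝ} {θstar : Fin 2} {Ω : Type*} [MeasurableSpace Ω]
  (proc : TSProcess B prior θstar Ω)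

instance : IsProbabilityMeasure proc.P := proc.P_prob

def odds (s : ℕ) (ω : Ω) : ℝ := proc.p s ω / (1 - proc.p s ω)

def posterior (s : ℕ) (i : Fin 2) (ω : Ω) : ℝ := if i = 0 then proc.p s ω else 1 - proc.p s ω

def actionIndicator (s : ℕ) (i : Fin 2) (ω : Ω) : ℝ := if proc.I s ω = i then 1 else 0

lemma measurable_p (s : ℕ) : Measurable (proc.p s) :=
  (proc.p_adapted s).mono (proc.F.le s) le_rfl

lemma measurable_I (s : ℕ) : Measurable (proc.I s) :=
  (proc.I_meas s).mono (proc.F.le (s + 1)) le_rfl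

lemma integrable_p (s : ℕ) : Integrable (proc.p s) proc.P :=
  .of_bound (proc.measurable_p s).aestronglyMeasurable 1 <| ae_of_all _ fun ω => by
    rw [Real.norm_eq_abs, abs_of_nonneg (proc.p_mem s ω).1]
    exact (proc.p_mem s ω).2

lemma odds_eq_inv_sub_one {s : ℕ} {ω : Ω} (hp : proc.p s ω < 1) :
    proc.odds s ω = (1 - proc.p s ω)⁻¹ - 1 := by
  have : 1 - proc.p s ω ≠ 0 := by linarith
  rw [odds]
  field_simp
  ring

lemma odds_nonneg (s : ℕ) (ω : Ω) : 0 ≤ proc.odds s ω :=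
  div_nonneg (proc.p_mem s ω).1 (sub_nonneg.2 (proc.p_mem s ω).2)

lemma measurable_odds (s : ℕ) : Measurable[proc.F s] (proc.odds s) :=
  (proc.p_adapted s).div (measurable_const.sub (proc.p_adapted s))

lemma integrable_actionIndicator (s : ℕ) (i : Fin 2) :
    Integrable (proc.actionIndicator s i) proc.P :=
  .of_bound ((measurable_const.ite (proc.measurable_I s (measurableSet_singleton i))
    measurable_const).aestronglyMeasurable) 1 <| ae_of_all _ fun ω => by
      unfold actionIndicator; split_ifs <;> simp

lemma condExp_actionIndicator {s : ℕ} (hs : 1 ≤ s) (i : Fin 2) :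
    proc.P[proc.actionIndicator s i|proc.F s] =ᵐ[proc.P] proc.posterior s i := by
  match i with
  | 0 => exact proc.action_prob s hs
  | 1 =>
    have h : proc.actionIndicator s 1 = (fun _ => 1) - proc.actionIndicator s 0 := by
      funext ω
      simp only [actionIndicator, Pi.sub_apply]
      generalize proc.I s ω = j
      fin_cases j <;> simp
    rw [h]
    filter_upwards [condExp_sub (integrable_const 1) (proc.integrable_actionIndicator s 0)
      (proc.F s), proc.action_prob s hs] with ω h₁ h₀
    simp only [h₁, Pi.sub_apply, condExp_const (proc.F.le s), posterior]
    exact congrArg (1 - ·) h₀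

lemma integral_mul_actionIndicator {s : ℕ} (hs : 1 ≤ s) (i : Fin 2) {Y : Ω → ℝ}
    (hY : StronglyMeasurable[proc.F s] Y) (hYi : Integrable (Y * proc.actionIndicator s i) proc.P) :
    ∫ ω, (Y * proc.actionIndicator s i) ω ∂proc.P = ∫ ω, Y ω * proc.posterior s i ω ∂proc.P := by
  rw [← integral_condExp (proc.F.le s)]
  refine integral_congr_ae ?_
  filter_upwards [condExp_mul_of_stronglyMeasurable_left hY hYi
    (proc.integrable_actionIndicator s i), proc.condExp_actionIndicator hs i] with ω h₁ h₂
  rw [h₁, Pi.mul_apply, h₂]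

section Rewards

variable {i : Fin 2} {s : ℕ} {h : ℝ → ℝ}

lemma ae_comp_X {q : ℝ → Prop} (hq : ∀ᵐ x ∂B.dist i θstar, q x) :
    ∀ᵐ ω ∂proc.P, q (proc.X i s ω) := by
  rw [← proc.reward_law i s] at hq
  exact ae_of_ae_map (proc.X_meas i s).aemeasurable hq

lemma integrable_comp_X (hh : Integrable h (B.dist i θstar)) :
    Integrable (fun ω => h (proc.X i s ω)) proc.P := by
  rw [← proc.reward_law i s] at hh
  exact hh.comp_measurable (proc.X_meas i s)

lemma integral_comp_X (hh : AEStronglyMeasurable h (B.dist i θstar)) :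
    ∫ ω, h (proc.X i s ω) ∂proc.P = ∫ x, h x ∂B.dist i θstar := by
  rw [← proc.reward_law i s] at hh ⊢
  exact (integral_map (proc.X_meas i s).aemeasurable hh).symm

lemma indepFun_comp_X (hm : Measurable h) {V : Ω → ℝ}
    (hV : Measurable[proc.F s ⊔ MeasurableSpace.comap (proc.I s) ⊤] V) :
    IndepFun (fun ω => h (proc.X i s ω)) V proc.P :=
  have hXV : IndepFun (proc.X i s) V proc.P :=
    indep_of_indep_of_le_right (proc.reward_indep i s) hV.comap_le
  hXV.comp hm measurable_id

lemma integrable_comp_X_mul (hm : Measurable h) (hh : Integrable h (B.dist i θstar)) {V : Ω → ℝ}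
    (hV : Measurable[proc.F s ⊔ MeasurableSpace.comap (proc.I s) ⊤] V)
    (hVi : Integrable V proc.P) :
    Integrable (fun ω => h (proc.X i s ω) * V ω) proc.P :=
  (proc.indepFun_comp_X hm hV).integrable_mul (proc.integrable_comp_X hh) hVi

lemma integral_comp_X_mul (hm : Measurable h) (hh : Integrable h (B.dist i θstar)) {V : Ω → ℝ}
    (hV : Measurable[proc.F s ⊔ MeasurableSpace.comap (proc.I s) ⊤] V)
    (hVi : Integrable V proc.P) :
    ∫ ω, h (proc.X i s ω) * V ω ∂proc.P = (∫ x, h x ∂B.dist i θstar) * ∫ ω, V ω ∂proc.P :=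
  ((proc.indepFun_comp_X hm hV).integral_mul_eq_mul_integral
    (proc.integrable_comp_X hh).aestronglyMeasurable hVi.aestronglyMeasurable).trans
    (congrArg (· * _) (proc.integral_comp_X hh.aestronglyMeasurable))

end Rewards

lemma measurable_odds_mul_actionIndicator (s : ℕ) (i : Fin 2) :
    Measurable[proc.F s ⊔ MeasurableSpace.comap (proc.I s) ⊤]
      (proc.odds s * proc.actionIndicator s i) := by
  have hind : Measurable[MeasurableSpace.comap (proc.I s) ⊤] (proc.actionIndicator s i) :=
    (measurable_from_top (f := fun j : Fin 2 => if j = i then (1 : ℝ) else 0)).comp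
      (comap_measurable (proc.I s))
  exact ((proc.measurable_odds s).mono le_sup_left le_rfl).mul (hind.mono le_sup_right le_rfl)

lemma odds_mul_actionIndicator_zero_add_one (s : ℕ) :
    proc.odds s * proc.actionIndicator s 0 + proc.odds s * proc.actionIndicator s 1 =
      proc.odds s := by
  funext ω
  simp only [actionIndicator, Pi.add_apply, Pi.mul_apply]
  generalize proc.I s ω = j
  fin_cases j <;> simp

lemma inv_one_sub_p_succ_eq {s : ℕ} (hs : 1 ≤ s) {ω : Ω} (hp : proc.p s ω < 1)
    (hℓ : ∀ i, 0 < B.ℓ i 1 (proc.X i s ω)) :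
    (1 - proc.p (s + 1) ω)⁻¹ =
      1 + ∑ i, B.likelihoodRatio i (proc.X i s ω) * (proc.odds s * proc.actionIndicator s i) ω := by
  rw [proc.bayes s ω hs, inv_one_sub_bayes_eq (proc.p_mem s ω).1 hp (B.ℓ_nonneg _ _ _) (hℓ _),
    Fin.sum_univ_two]
  simp only [actionIndicator, odds, Pi.mul_apply, TwoTwoBandit.likelihoodRatio]
  generalize proc.I s ω = j
  fin_cases j <;> simp

lemma p_succ_lt_one {s : ℕ} (hs : 1 ≤ s) {ω : Ω} (hp : proc.p s ω < 1)
    (hℓ : ∀ i, 0 < B.ℓ i 1 (proc.X i s ω)) : proc.p (s + 1) ω < 1 := by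
  rw [proc.bayes s ω hs]
  exact bayes_lt_one (proc.p_mem s ω).1 hp (B.ℓ_nonneg _ _ _) (hℓ _)

lemma ae_p_lt_one (hprior : prior < 1) (hpos : ∀ i, ∀ᵐ x ∂B.dist i θstar, 0 < B.ℓ i 1 x) :
    ∀ s, 1 ≤ s → ∀ᵐ ω ∂proc.P, proc.p s ω < 1 := by
  intro s hs
  induction s, hs using Nat.le_induction with
  | base => exact ae_of_all _ fun ω => (proc.p_one ω).symm ▸ hprior
  | succ s hs ih =>
    filter_upwards [ih, ae_all_iff.2 fun i => proc.ae_comp_X (s := s) (hpos i)] with ω hp hℓ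
    exact proc.p_succ_lt_one hs hp hℓ

lemma integrable_odds_mul_actionIndicator {s : ℕ} (hp : ∀ᵐ ω ∂proc.P, proc.p s ω < 1)
    (hr : Integrable (fun ω => (1 - proc.p s ω)⁻¹) proc.P) (i : Fin 2) :
    Integrable (proc.odds s * proc.actionIndicator s i) proc.P := by
  have hodds : Integrable (proc.odds s) proc.P :=
    (hr.sub (integrable_const 1)).congr <| by
      filter_upwards [hp] with ω h using (proc.odds_eq_inv_sub_one h).symm
  refine hodds.mul_bdd (c := 1) (proc.integrable_actionIndicator s i).aestronglyMeasurable
    (ae_of_all _ fun ω => ?_)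
  unfold actionIndicator; split_ifs <;> simp

lemma integral_odds_mul_actionIndicator_one {s : ℕ} (hs : 1 ≤ s) (hp : ∀ᵐ ω ∂proc.P, proc.p s ω < 1)
    (hr : Integrable (fun ω => (1 - proc.p s ω)⁻¹) proc.P) :
    ∫ ω, (proc.odds s * proc.actionIndicator s 1) ω ∂proc.P = ∫ ω, proc.p s ω ∂proc.P := by
  rw [proc.integral_mul_actionIndicator hs 1
    (proc.measurable_odds s).stronglyMeasurable
    (proc.integrable_odds_mul_actionIndicator hp hr 1)]
  refine integral_congr_ae ?_
  filter_upwards [hp] with ω h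
  have : 1 - proc.p s ω ≠ 0 := by linarith
  simp only [odds, posterior]
  field_simp
  simp

lemma integral_inv_one_sub_p_eq {s : ℕ} (hp : ∀ᵐ ω ∂proc.P, proc.p s ω < 1)
    (hr : Integrable (fun ω => (1 - proc.p s ω)⁻¹) proc.P) :
    ∫ ω, (1 - proc.p s ω)⁻¹ ∂proc.P = 1 + ∫ ω, (proc.odds s * proc.actionIndicator s 0) ω ∂proc.P
      + ∫ ω, (proc.odds s * proc.actionIndicator s 1) ω ∂proc.P := by
  have hV := proc.integrable_odds_mul_actionIndicator hp hr
  have hodds : (fun ω => (1 - proc.p s ω)⁻¹) =ᵐ[proc.P] fun ω =>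
      1 + (proc.odds s * proc.actionIndicator s 0 + proc.odds s * proc.actionIndicator s 1) ω := by
    filter_upwards [hp] with ω h
    rw [proc.odds_mul_actionIndicator_zero_add_one, proc.odds_eq_inv_sub_one h]
    ring
  rw [integral_congr_ae hodds, integral_add (integrable_const 1) ((hV 0).add (hV 1)),
    integral_add' (hV 0) (hV 1), integral_const, probReal_univ, smul_eq_mul, one_mul, add_assoc]

theorem integral_inv_one_sub_p_succ_le {s : ℕ} (hs : 1 ≤ s) (hp : ∀ᵐ ω ∂proc.P, proc.p s ω < 1)
    (hr : Integrable (fun ω => (1 - proc.p s ω)⁻¹) proc.P) {c : ℝ} (hc : 0 ≤ c)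
    (hB : B.LikelihoodRatioBound θstar c) :
    Integrable (fun ω => (1 - proc.p (s + 1) ω)⁻¹) proc.P ∧
      ∫ ω, (1 - proc.p (s + 1) ω)⁻¹ ∂proc.P ≤ ∫ ω, (1 - proc.p s ω)⁻¹ ∂proc.P + c := by
  set V : Fin 2 → Ω → ℝ := fun i => proc.odds s * proc.actionIndicator s i
  have hV : ∀ i, Integrable (V i) proc.P := proc.integrable_odds_mul_actionIndicator hp hr
  have hW : ∀ i, Integrable (fun ω => B.likelihoodRatio i (proc.X i s ω) * V i ω) proc.P :=
    fun i => proc.integrable_comp_X_mul (B.measurable_likelihoodRatio i) (hB.integrable i)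
      (proc.measurable_odds_mul_actionIndicator s i) (hV i)
  have hEW : ∀ i, ∫ ω, B.likelihoodRatio i (proc.X i s ω) * V i ω ∂proc.P =
      (∫ x, B.likelihoodRatio i x ∂B.dist i θstar) * ∫ ω, V i ω ∂proc.P :=
    fun i => proc.integral_comp_X_mul (B.measurable_likelihoodRatio i) (hB.integrable i)
      (proc.measurable_odds_mul_actionIndicator s i) (hV i)
  have hbayes : (fun ω => (1 - proc.p (s + 1) ω)⁻¹) =ᵐ[proc.P]
      fun ω => 1 + ∑ i, B.likelihoodRatio i (proc.X i s ω) * V i ω := by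
    filter_upwards [hp, ae_all_iff.2 fun i => proc.ae_comp_X (s := s) (hB.ae_ℓ_pos i)] with ω h hℓ
    exact proc.inv_one_sub_p_succ_eq hs h hℓ
  have hV₀ : 0 ≤ ∫ ω, V 0 ω ∂proc.P := integral_nonneg fun ω =>
    mul_nonneg (proc.odds_nonneg s ω) (by unfold actionIndicator; split_ifs <;> simp)
  have hV₁ : ∫ ω, V 1 ω ∂proc.P = ∫ ω, proc.p s ω ∂proc.P :=
    proc.integral_odds_mul_actionIndicator_one hs hp hr
  have hp₀ : 0 ≤ ∫ ω, proc.p s ω ∂proc.P := integral_nonneg fun ω => (proc.p_mem s ω).1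
  have hp₁ : ∫ ω, proc.p s ω ∂proc.P ≤ 1 := by
    simpa using integral_mono (proc.integrable_p s) (integrable_const 1) fun ω => (proc.p_mem s ω).2
  have hsum : Integrable (fun ω => ∑ i, B.likelihoodRatio i (proc.X i s ω) * V i ω) proc.P :=
    integrable_finsetSum _ fun i _ => hW i
  refine ⟨((integrable_const 1).add hsum).congr hbayes.symm, ?_⟩
  rw [integral_congr_ae hbayes, integral_add (integrable_const 1) hsum,
    integral_finsetSum _ fun i _ => hW i, Fin.sum_univ_two, hEW, hEW,
    proc.integral_inv_one_sub_p_eq hp hr, integral_const, probReal_univ, smul_eq_mul, one_mul]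
  nlinarith [mul_le_mul_of_nonneg_right hB.integral_zero_le hV₀,
    mul_le_mul_of_nonneg_right hB.integral_one_le (hV₁ ▸ hp₀)]

theorem integral_inv_one_sub_p_le (hprior : prior < 1) {c : ℝ} (hc : 0 ≤ c)
    (hB : B.LikelihoodRatioBound θstar c) (s : ℕ) (hs : 1 ≤ s) :
    Integrable (fun ω => (1 - proc.p s ω)⁻¹) proc.P ∧
      ∫ ω, (1 - proc.p s ω)⁻¹ ∂proc.P ≤ (1 - prior)⁻¹ + (s - 1) * c := by
  induction s, hs using Nat.le_induction with
  | base => simp [proc.p_one]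
  | succ s hs ih =>
    obtain ⟨hr, hle⟩ := ih
    obtain ⟨hr', hle'⟩ := proc.integral_inv_one_sub_p_succ_le hs
      (proc.ae_p_lt_one hprior hB.ae_ℓ_pos s hs) hr hc hB
    refine ⟨hr', ?_⟩
    push_cast
    linarith

end TSProcess

theorem thompson_sampling_good_prior_inverse_posterior_bound_general
    (B : TwoTwoBandit) (prior : ℝ) (T : ℕ)
    (hprior1 : prior < 1)
    (hT : 1 / (1 - prior) ≤ (T : ℝ))
    (hinst1 : B.dist 0 0 = bern (1 / 2))
    (hinst2 : B.dist 0 1 = bern (1 / 2))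
    (hinst3 : B.dist 1 0 = bern (1 / 2 - Real.sqrt (1 / (8 * (1 - prior) * T))))
    (hinst4 : B.dist 1 1 = bern (1 / 2 + Real.sqrt (1 / (8 * (1 - prior) * T))))
    (Ω : Type*) [MeasurableSpace Ω] (proc : TSProcess B prior 0 Ω)
    (t : ℕ) (ht1 : 1 ≤ t) (htT : t ≤ T) :
    (∫ ω, (1 - proc.p t ω)⁻¹ ∂proc.P ≤ 5 / (1 - prior)) ∧
      (1 - prior) / 5 ≤ ∫ ω, (1 - proc.p t ω) ∂proc.P := by
  have hq : 0 < 1 - prior := by linarith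
  have hT' : 1 ≤ (1 - prior) * T := by rwa [div_le_iff₀ hq, mul_comm] at hT
  set Δ := Real.sqrt (1 / (8 * (1 - prior) * T))
  have hΔ : Δ ^ 2 * (8 * ((1 - prior) * T)) = 1 := by
    have : 0 < (T : ℝ) := by nlinarith
    rw [Real.sq_sqrt (by positivity)]
    field_simp
  have hΔ₈ : Δ ^ 2 ≤ 1 / 8 := by nlinarith
  have hΔT : T * (32 * Δ ^ 2) = 4 / (1 - prior) := by
    rw [eq_div_iff hq.ne']
    linear_combination 4 * hΔ
  have hB := B.likelihoodRatioBound_of_bern hΔ₈ hinst1 hinst2 hinst3 hinst4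
  obtain ⟨hr, hle⟩ := proc.integral_inv_one_sub_p_le hprior1 (by positivity) hB t ht1
  have hbound : ∫ ω, (1 - proc.p t ω)⁻¹ ∂proc.P ≤ 5 / (1 - prior) := calc
    _ ≤ (1 - prior)⁻¹ + (t - 1) * (32 * Δ ^ 2) := hle
    _ ≤ (1 - prior)⁻¹ + T * (32 * Δ ^ 2) := by gcongr; linarith [(Nat.cast_le (α := ℝ)).2 htT]
    _ = 5 / (1 - prior) := by rw [hΔT]; ring
  refine ⟨hbound, ?_⟩
  rw [← inv_div]
  exact inv_le_integral_of_integral_inv_le (by positivity)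
    ((integrable_const 1).sub (proc.integrable_p t))
    ((proc.ae_p_lt_one hprior1 hB.ae_ℓ_pos t ht1).mono fun ω h => sub_pos.2 h) hr hbound

/-- **Key step of Theorem 3 (inverse posterior of θ2 stays bounded).**  For the
good-prior Bernoulli instance `ν_1(θ1) = ν_1(θ2) = Bern(1/2)`, `ν_2(θ1) = Bern(1/2 − Δ)`,
`ν_2(θ2) = Bern(1/2 + Δ)` with `Δ = √(1/(8(1 − p_1(θ1))T))` and `T ≥ 1/(1 − p_1(θ1))`,
for every `1 ≤ t ≤ T` one has `E^{θ1}[p_t(θ2)⁻¹] ≤ 5/(1 − p_1(θ1))` and consequently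
`E^{θ1}[p_t(θ2)] ≥ (1 − p_1(θ1))/5`. -/
theorem thompson_sampling_good_prior_inverse_posterior_bound
    (B : TwoTwoBandit) (prior : ℝ) (T : ℕ)
    (hprior0 : 0 ≤ prior) (hprior1 : prior < 1)
    (hT : 1 / (1 - prior) ≤ (T : ℝ))
    (hinst1 : B.dist 0 0 = bern (1 / 2))
    (hinst2 : B.dist 0 1 = bern (1 / 2))
    (hinst3 : B.dist 1 0 = bern (1 / 2 - Real.sqrt (1 / (8 * (1 - prior) * T))))
    (hinst4 : B.dist 1 1 = bern (1 / 2 + Real.sqrt (1 / (8 * (1 - prior) * T))))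
    (Ω : Type*) [MeasurableSpace Ω] (proc : TSProcess B prior 0 Ω)
    (t : ℕ) (ht1 : 1 ≤ t) (htT : t ≤ T) :
    (∫ ω, (1 - proc.p t ω)⁻¹ ∂proc.P ≤ 5 / (1 - prior)) ∧
      (1 - prior) / 5 ≤ ∫ ω, (1 - proc.p t ω) ∂proc.P :=
  thompson_sampling_good_prior_inverse_posterior_bound_general B prior T hprior1 hT hinst1 hinst2
    hinst3 hinst4 Ω proc t ht1 htT
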